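/- arXiv:1906.07526 — 5 statements merged into one kernel-verified Lean document; each statement's English description precedes it below -/
import Mathlib

section
/- For a natural number k ≥ 1, the k×k determinant of the lower-Hessenberg matrix with entries a_{ij} = a^{i-j+1} for i ≥ j, a_{ij} = -i for j = i+1, and 0 otherwise, equals k! · a^k. -/
theorem det_hessenberg_powers {R : Type*} [CommRing R] (a : R) (k : ℕ) (hk : 1 ≤ k) :
    Matrix.det (Matrix.of fun i j : Fin k =>
      if (j : ℕ) = (i : ℕ) + 1 then -(((i : ℕ) + 1 : ℕ) : R)
      else if (j : ℕ) ≤ (i : ℕ) then a ^ ((i : ℕ) - (j : ℕ) + 1)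
      else 0) = (Nat.factorial k : R) * a ^ k := by
  set M : Matrix (Fin k) (Fin k) R := Matrix.of fun i j : Fin k =>
      if (j : ℕ) = (i : ℕ) + 1 then -(((i : ℕ) + 1 : ℕ) : R)
      else if (j : ℕ) ≤ (i : ℕ) then a ^ ((i : ℕ) - (j : ℕ) + 1)
      else 0 with hM
  set L : Matrix (Fin k) (Fin k) R := Matrix.of fun i j : Fin k =>
      (if i = j then (1:R) else 0) + (if (j:ℕ)+1 = (i:ℕ) then -a else 0) with hLdef
  set M' : Matrix (Fin k) (Fin k) R := Matrix.of fun i j : Fin k =>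
      if (j:ℕ) = (i:ℕ) then (((i:ℕ)+1 : ℕ) : R) * a
      else if (j:ℕ) = (i:ℕ)+1 then -(((i:ℕ)+1 : ℕ) : R) else 0 with hM'
  have hLM : L * M = M' := by
    ext i j
    rw [Matrix.mul_apply]
    simp only [hLdef, hM, hM', Matrix.of_apply, add_mul, ite_mul, one_mul, zero_mul,
      Finset.sum_add_distrib, Finset.sum_ite_eq Finset.univ i, Finset.mem_univ, if_true]
    rcases Nat.eq_zero_or_pos (i : ℕ) with hi | hi
    · rw [Finset.sum_eq_zero (fun l _ => by rw [if_neg (by omega)]), add_zero]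
      split_ifs <;> try omega
      all_goals first
        | rfl
        | (rw [show (i:ℕ)-(j:ℕ)+1 = 1 by omega, show (i:ℕ)+1 = 1 by omega]; simp)
    · have hmk : (i : ℕ) - 1 < k := by omega
      rw [Finset.sum_eq_single (⟨(i:ℕ)-1, hmk⟩ : Fin k)]
      · rw [if_pos (show ((i:ℕ)-1)+1 = (i:ℕ) by omega)]
        simp only [Fin.val_mk]
        split_ifs <;> try omega
        all_goals first
          | ring1
          | (rw [show (i:ℕ)-(j:ℕ)+1 = 1 by omega, show (i:ℕ)-1+1 = (i:ℕ) by omega];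
             push_cast; ring)
          | (rw [show (i:ℕ)-(j:ℕ)+1 = ((i:ℕ)-1-(j:ℕ)+1)+1 by omega, pow_succ]; ring)
      · intro l _ hl
        rw [if_neg (fun hc => hl (by apply Fin.ext; simp at hc ⊢; omega))]
      · intro h; exact absurd (Finset.mem_univ _) h
  have hLdet : L.det = 1 := by
    have htri : L.BlockTriangular OrderDual.toDual := by
      intro i j hij
      have : (i : ℕ) < (j : ℕ) := hij
      simp only [hLdef, Matrix.of_apply]
      rw [if_neg (by intro h; subst h; omega), if_neg (by omega), add_zero]
    rw [Matrix.det_of_lowerTriangular L htri]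
    apply Finset.prod_eq_one
    intro i _
    simp [hLdef]
  have hdet : M'.det = M.det := by
    rw [← hLM, Matrix.det_mul, hLdet, one_mul]
  rw [← hdet]
  have htri' : M'.BlockTriangular id := by
    intro i j hij
    have : (j : ℕ) < (i : ℕ) := hij
    simp only [hM', Matrix.of_apply]
    rw [if_neg (by omega), if_neg (by omega)]
  rw [Matrix.det_of_upperTriangular htri']
  simp only [hM', Matrix.of_apply, eq_self_iff_true, if_true]
  rw [Finset.prod_mul_distrib, Finset.prod_const, Finset.card_univ, Fintype.card_fin]
  congr 1
  rw [← Nat.cast_prod]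
  congr 1
  rw [Fin.prod_univ_eq_prod_range (fun i => i + 1) k]
  exact Finset.prod_range_add_one_eq_factorial k
end

section
/- For complex numbers y, z with |y| < 1, |z| < 1, and real s, t with s + t = 1: ∑ over pairs of coprime positive integers (a,b) of (1/(a^s b^t)) · (−log(1 − y^a z^b)) equals (∑_{i≥1} y^i / i^s) · (∑_{j≥1} z^j / j^t). -/
/-!
Every pair of positive integers is uniquely `(d a, d b)` with `gcd a b = 1` (and `d` the gcd).
Expand the product of the two series as a sum over all pairs `(i, j)` and group it by this
decomposition: since `s + t = 1`, `i ^ s * j ^ t = a ^ s * b ^ t * d`, so the fibre over `(a, b)` is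
`(a ^ s * b ^ t)⁻¹ * ∑ d, (y ^ a * z ^ b) ^ d / d = (a ^ s * b ^ t)⁻¹ * -log (1 - y ^ a * z ^ b)`.
-/

open Complex

abbrev PosCoprimePair : Type := {p : ℕ × ℕ // 0 < p.1 ∧ 0 < p.2 ∧ Nat.gcd p.1 p.2 = 1}

namespace PosCoprimePair

def scale (p : PosCoprimePair) (d : ℕ+) : ℕ+ × ℕ+ :=
  (⟨p.1.1 * d, Nat.mul_pos p.2.1 d.pos⟩, ⟨p.1.2 * d, Nat.mul_pos p.2.2.1 d.pos⟩)

@[simp] lemma coe_scale_fst (p : PosCoprimePair) (d : ℕ+) :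
    ((p.scale d).1 : ℕ) = p.1.1 * d := rfl

@[simp] lemma coe_scale_snd (p : PosCoprimePair) (d : ℕ+) :
    ((p.scale d).2 : ℕ) = p.1.2 * d := rfl

lemma gcd_scale (p : PosCoprimePair) (d : ℕ+) :
    Nat.gcd (p.scale d).1 (p.scale d).2 = d := by
  rw [coe_scale_fst, coe_scale_snd, Nat.gcd_mul_right, p.2.2.2, one_mul]

theorem bijective_uncurry_scale : Function.Bijective (Function.uncurry scale) := by
  constructor
  · rintro ⟨p, d⟩ ⟨p', d'⟩ h
    simp only [Function.uncurry_apply_pair] at h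
    have hd : d = d' := PNat.coe_injective <| by rw [← gcd_scale p d, ← gcd_scale p' d', h]
    subst hd
    have h₁ := Nat.eq_of_mul_eq_mul_right d.pos (congrArg (fun q => (q.1 : ℕ)) h)
    have h₂ := Nat.eq_of_mul_eq_mul_right d.pos (congrArg (fun q => (q.2 : ℕ)) h)
    exact Prod.ext (Subtype.ext (Prod.ext h₁ h₂)) rfl
  · rintro ⟨i, j⟩
    obtain ⟨a, b, hab, hi, hj⟩ := Nat.exists_coprime i j
    have hg : 0 < Nat.gcd i j := Nat.gcd_pos_of_pos_left _ i.pos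
    refine ⟨(⟨(a, b), Nat.pos_of_mul_pos_right (hi ▸ i.pos),
      Nat.pos_of_mul_pos_right (hj ▸ j.pos), hab⟩, ⟨_, hg⟩), ?_⟩
    exact Prod.ext (PNat.eq hi.symm) (PNat.eq hj.symm)

theorem tsum_eq_tsum_tsum_scale {E : Type*} [NormedAddCommGroup E] [CompleteSpace E]
    {f : ℕ+ × ℕ+ → E} (hf : Summable f) :
    ∑' q, f q = ∑' (p : PosCoprimePair) (d : ℕ+), f (p.scale d) := by
  let e := Equiv.ofBijective _ bijective_uncurry_scale
  have hfe : Summable (f ∘ e) := e.summable_iff.mpr hf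
  rw [← e.tsum_eq]
  exact hfe.tsum_prod' hfe.prod_factor

end PosCoprimePair

lemma summable_norm_pow_div_rpow {y : ℂ} (hy : ‖y‖ < 1) (s : ℝ) :
    Summable fun n : ℕ+ => ‖y ^ (n : ℕ) / ((((n : ℕ) : ℝ) ^ s : ℝ) : ℂ)‖ := by
  set k := ⌈-s⌉₊
  have hgeom : Summable fun n : ℕ => (n : ℝ) ^ k * ‖y‖ ^ n :=
    summable_pow_mul_geometric_of_norm_lt_one k (by rwa [norm_norm])
  refine .of_nonneg_of_le (fun _ => norm_nonneg _) (fun n => ?_)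
    (hgeom.comp_injective PNat.coe_injective)
  have hn : (1 : ℝ) ≤ (n : ℕ) := by exact_mod_cast n.pos
  calc ‖y ^ (n : ℕ) / ((((n : ℕ) : ℝ) ^ s : ℝ) : ℂ)‖
        = ((n : ℕ) : ℝ) ^ (-s) * ‖y‖ ^ (n : ℕ) := by
        rw [norm_div, norm_real, norm_pow, Real.norm_of_nonneg (by positivity),
          Real.rpow_neg (by positivity), div_eq_inv_mul]
    _ ≤ ((n : ℕ) : ℝ) ^ (k : ℝ) * ‖y‖ ^ (n : ℕ) := by
        gcongr
        exact Nat.le_ceil _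
    _ = _ := by rw [Real.rpow_natCast]; rfl

lemma hasSum_pnat_pow_div_neg_log {w : ℂ} (hw : ‖w‖ < 1) :
    HasSum (fun d : ℕ+ => w ^ (d : ℕ) / ((d : ℕ) : ℂ)) (-log (1 - w)) := by
  rw [hasSum_pnat_iff (f := fun n : ℕ => w ^ n / (n : ℂ))]
  simpa using hasSum_taylorSeries_neg_log hw

lemma Real.mul_rpow_mul_mul_rpow_of_add_eq_one {a b d s t : ℝ} (ha : 0 ≤ a) (hb : 0 ≤ b)
    (hd : 0 ≤ d) (hst : s + t = 1) : (a * d) ^ s * (b * d) ^ t = a ^ s * b ^ t * d := by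
  rw [mul_rpow ha hd, mul_rpow hb hd, mul_mul_mul_comm, ← rpow_add' hd (by simp [hst]), hst,
    rpow_one]

lemma pow_div_rpow_mul_pow_div_rpow {s t : ℝ} (hst : s + t = 1) (y z : ℂ) (a b d : ℕ) :
    y ^ (a * d) / ((((a * d : ℕ) : ℝ) ^ s : ℝ) : ℂ) *
        (z ^ (b * d) / ((((b * d : ℕ) : ℝ) ^ t : ℝ) : ℂ)) =
      1 / ((((a : ℝ) ^ s * (b : ℝ) ^ t : ℝ)) : ℂ) * ((y ^ a * z ^ b) ^ d / (d : ℂ)) := by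
  rw [div_mul_div_comm, div_mul_div_comm, one_mul, ← ofReal_mul, Nat.cast_mul, Nat.cast_mul,
    Real.mul_rpow_mul_mul_rpow_of_add_eq_one (by positivity) (by positivity) (by positivity) hst,
    mul_pow, ← pow_mul, ← pow_mul]
  push_cast
  rfl

lemma norm_pow_mul_pow_lt_one {R : Type*} [SeminormedRing R] [NormOneClass R] {y z : R}
    (hy : ‖y‖ < 1) (hz : ‖z‖ ≤ 1) {a : ℕ} (ha : 0 < a) (b : ℕ) : ‖y ^ a * z ^ b‖ < 1 :=
  calc ‖y ^ a * z ^ b‖ ≤ ‖y‖ ^ a * ‖z‖ ^ b := (norm_mul_le _ _).trans <|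
          mul_le_mul (norm_pow_le' y ha) (norm_pow_le z b) (norm_nonneg _) (by positivity)
    _ ≤ ‖y‖ * 1 := mul_le_mul (pow_le_of_le_one (norm_nonneg _) hy.le ha.ne')
          (pow_le_one₀ (norm_nonneg _) hz) (by positivity) (norm_nonneg _)
    _ < 1 := by rwa [mul_one]

theorem vpv_first_quadrant_log_identity (y z : ℂ) (hy : ‖y‖ < 1)
    (hz : ‖z‖ < 1) (s t : ℝ) (hst : s + t = 1) :
    ∑' p : {p : ℕ × ℕ // 0 < p.1 ∧ 0 < p.2 ∧ Nat.gcd p.1 p.2 = 1},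
        (1 / ((((p : ℕ × ℕ).1 : ℝ) ^ s * ((p : ℕ × ℕ).2 : ℝ) ^ t : ℝ) : ℂ)) *
          (-Complex.log (1 - y ^ (p : ℕ × ℕ).1 * z ^ (p : ℕ × ℕ).2)) =
      (∑' i : ℕ, y ^ (i + 1) / ((((i : ℝ) + 1) ^ s : ℝ) : ℂ)) *
        (∑' j : ℕ, z ^ (j + 1) / ((((j : ℝ) + 1) ^ t : ℝ) : ℂ)) := by
  let f : ℕ+ → ℂ := fun i => y ^ (i : ℕ) / ((((i : ℕ) : ℝ) ^ s : ℝ) : ℂ)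
  let g : ℕ+ → ℂ := fun j => z ^ (j : ℕ) / ((((j : ℕ) : ℝ) ^ t : ℝ) : ℂ)
  have hf := summable_norm_pow_div_rpow hy s
  have hg := summable_norm_pow_div_rpow hz t
  have h_fiber (p : PosCoprimePair) :
      ∑' d : ℕ+, f (p.scale d).1 * g (p.scale d).2 =
        1 / ((((p.1.1 : ℝ) ^ s * (p.1.2 : ℝ) ^ t : ℝ)) : ℂ) *
          -log (1 - y ^ p.1.1 * z ^ p.1.2) := by
    simp only [f, g, PosCoprimePair.coe_scale_fst, PosCoprimePair.coe_scale_snd,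
      pow_div_rpow_mul_pow_div_rpow hst]
    have hw := norm_pow_mul_pow_lt_one hy hz.le p.2.1 p.1.2
    rw [tsum_mul_left, (hasSum_pnat_pow_div_neg_log hw).tsum_eq]
  calc _ = ∑' (p : PosCoprimePair) (d : ℕ+), f (p.scale d).1 * g (p.scale d).2 :=
        (tsum_congr h_fiber).symm
    _ = ∑' q : ℕ+ × ℕ+, f q.1 * g q.2 :=
        (PosCoprimePair.tsum_eq_tsum_tsum_scale (f := fun q => f q.1 * g q.2)
          (summable_mul_of_summable_norm hf hg)).symm
    _ = (∑' i, f i) * ∑' j, g j := (tsum_mul_tsum_of_summable_norm hf hg).symm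
    _ = _ := by
        rw [tsum_pnat_eq_tsum_succ (f := fun i => y ^ i / (((i : ℝ) ^ s : ℝ) : ℂ)),
          tsum_pnat_eq_tsum_succ (f := fun j => z ^ j / (((j : ℝ) ^ t : ℝ) : ℂ))]
        push_cast
        rfl
end

section
/- For complex numbers x, y, z with |x| < 1, |y| < 1, |z| < 1: ∑ over triples (a,b,c) with a,b ≥ 0, c ≥ 1, gcd(a,b,c) = 1 of (1/c)·log(1 − x^a y^b z^c) equals log(1−z)/((1−x)(1−y)). -/
/-! Expanding each logarithm,
`(1/c) log (1 - x^a y^b z^c) = -∑_{n ≥ 1} x^(na) y^(nb) z^(nc) / (nc)`.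
As `p` runs over the primitive triples and `n` over the positive integers, `n • p` runs exactly
once over the triples with positive last coordinate, so the left side is
`-∑_{a, b ≥ 0, c ≥ 1} x^a y^b z^c / c`, the product of two geometric series and the series of
`-log (1 - z)`. -/

open Complex

lemma Nat.gcd_mul_left_three (n a b c : ℕ) :
    Nat.gcd (n * a) (Nat.gcd (n * b) (n * c)) = n * Nat.gcd a (Nat.gcd b c) := by
  rw [Nat.gcd_mul_left, Nat.gcd_mul_left]

abbrev PrimitiveTriple : Type :=
  {p : ℕ × ℕ × ℕ // 0 < p.2.2 ∧ Nat.gcd p.1 (Nat.gcd p.2.1 p.2.2) = 1}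

namespace PrimitiveTriple

def scale (pn : PrimitiveTriple × ℕ+) : ℕ × ℕ × ℕ :=
  (pn.2 * pn.1.1.1, pn.2 * pn.1.1.2.1, pn.2 * pn.1.1.2.2)

lemma scale_injective : Function.Injective scale := by
  rintro ⟨⟨⟨a, b, c⟩, _, hg⟩, n⟩ ⟨⟨⟨a', b', c'⟩, _, hg'⟩, n'⟩ h
  simp only [scale, Prod.mk.injEq] at h hg hg'
  obtain ⟨ha, hb, hc⟩ := h
  have hn : (n : ℕ) = n' := by
    simpa [Nat.gcd_mul_left_three, hg, hg'] using congr(Nat.gcd $ha (Nat.gcd $hb $hc))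
  rw [hn] at ha hb hc
  obtain rfl := Nat.eq_of_mul_eq_mul_left n'.pos ha
  obtain rfl := Nat.eq_of_mul_eq_mul_left n'.pos hb
  obtain rfl := Nat.eq_of_mul_eq_mul_left n'.pos hc
  obtain rfl := PNat.coe_injective hn
  rfl

lemma range_scale : Set.range scale = {q | 0 < q.2.2} := by
  ext ⟨a, b, c⟩
  simp only [Set.mem_range, Set.mem_ofPred_eq]
  constructor
  · rintro ⟨⟨p, n⟩, h⟩
    simp only [scale, Prod.mk.injEq] at h
    rw [← h.2.2]
    exact Nat.mul_pos n.pos p.2.1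
  · intro hc
    set g := Nat.gcd a (Nat.gcd b c)
    have hga : g ∣ a := Nat.gcd_dvd_left _ _
    have hgb : g ∣ b := (Nat.gcd_dvd_right _ _).trans (Nat.gcd_dvd_left _ _)
    have hgc : g ∣ c := (Nat.gcd_dvd_right _ _).trans (Nat.gcd_dvd_right _ _)
    have hg : 0 < g := Nat.pos_of_dvd_of_pos hgc hc
    refine ⟨(⟨(a / g, b / g, c / g), Nat.div_pos (Nat.le_of_dvd hc hgc) hg, ?_⟩, ⟨g, hg⟩), ?_⟩
    · have h := Nat.gcd_mul_left_three g (a / g) (b / g) (c / g)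
      rw [Nat.mul_div_cancel' hga, Nat.mul_div_cancel' hgb, Nat.mul_div_cancel' hgc] at h
      exact (Nat.mul_eq_left hg.ne').mp h.symm
    · show (g * (a / g), g * (b / g), g * (c / g)) = (a, b, c)
      rw [Nat.mul_div_cancel' hga, Nat.mul_div_cancel' hgb, Nat.mul_div_cancel' hgc]

end PrimitiveTriple

lemma hasSum_geometric_mul_geometric_mul {K : Type*} [NormedField K] [CompleteSpace K]
    {x y s : K} {f : ℕ → K} (hx : ‖x‖ < 1) (hy : ‖y‖ < 1) (hf : HasSum f s)
    (hf' : Summable fun n => ‖f n‖) :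
    HasSum (fun q : ℕ × ℕ × ℕ => x ^ q.1 * (y ^ q.2.1 * f q.2.2)) ((1 - x)⁻¹ * ((1 - y)⁻¹ * s)) := by
  have hnx : Summable fun n => ‖x ^ n‖ := summable_norm_geometric_of_norm_lt_one hx
  have hny : Summable fun n => ‖y ^ n‖ := summable_norm_geometric_of_norm_lt_one hy
  have hyf : HasSum (fun p : ℕ × ℕ => y ^ p.1 * f p.2) ((1 - y)⁻¹ * s) :=
    (hasSum_geometric_of_norm_lt_one hy).mul hf (summable_mul_of_summable_norm hny hf')
  have hxyf := summable_mul_of_summable_norm (f := (x ^ ·))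
    (g := fun p : ℕ × ℕ => y ^ p.1 * f p.2) hnx (hny.mul_norm hf')
  exact ((hasSum_geometric_of_norm_lt_one hx).mul hyf hxyf :)

namespace Complex

lemma hasSum_pnat_pow_div {w : ℂ} (hw : ‖w‖ < 1) :
    HasSum (fun n : ℕ+ => w ^ (n : ℕ) / (n : ℕ)) (-log (1 - w)) :=
  (hasSum_pnat_iff (f := fun n : ℕ => w ^ n / n)).mpr
    (by simpa using hasSum_taylorSeries_neg_log hw)

lemma summable_norm_pow_div {w : ℂ} (hw : ‖w‖ < 1) : Summable fun n : ℕ => ‖w ^ n / n‖ := by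
  refine (summable_geometric_of_lt_one (norm_nonneg w) hw).of_nonneg_of_le (fun _ => norm_nonneg _)
    fun n => ?_
  rcases n with _ | n
  · simp
  rw [norm_div, norm_pow, norm_natCast]
  exact div_le_self (by positivity) (by simp)

end Complex

lemma norm_pow_mul_pow_mul_pow_lt_one {K : Type*} [NormedDivisionRing K] {x y z : K}
    (hx : ‖x‖ < 1) (hy : ‖y‖ < 1) (hz : ‖z‖ < 1) (a b : ℕ) {c : ℕ} (hc : c ≠ 0) :
    ‖x ^ a * y ^ b * z ^ c‖ < 1 := by
  rw [norm_mul, norm_mul, norm_pow, norm_pow, norm_pow]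
  calc ‖x‖ ^ a * ‖y‖ ^ b * ‖z‖ ^ c ≤ 1 * 1 * ‖z‖ := by
        gcongr
        · exact pow_le_one₀ (norm_nonneg _) hx.le
        · exact pow_le_one₀ (norm_nonneg _) hy.le
        · exact pow_le_of_le_one (norm_nonneg _) hz.le hc
    _ < 1 := by simpa using hz

/-- The junk value `z ^ 0 / 0 = 0` makes the terms with `q.2.2 = 0` vanish. -/
noncomputable def logSeriesTerm (x y z : ℂ) (q : ℕ × ℕ × ℕ) : ℂ :=
  x ^ q.1 * (y ^ q.2.1 * (z ^ q.2.2 / q.2.2))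

lemma hasSum_logSeriesTerm {x y z : ℂ} (hx : ‖x‖ < 1) (hy : ‖y‖ < 1) (hz : ‖z‖ < 1) :
    HasSum (logSeriesTerm x y z) ((1 - x)⁻¹ * ((1 - y)⁻¹ * -log (1 - z))) :=
  hasSum_geometric_mul_geometric_mul (f := fun n : ℕ => z ^ n / n) hx hy
    (hasSum_taylorSeries_neg_log hz) (summable_norm_pow_div hz)

lemma logSeriesTerm_eq_zero {x y z : ℂ} {q : ℕ × ℕ × ℕ} (hq : q.2.2 = 0) :
    logSeriesTerm x y z q = 0 := by
  simp [logSeriesTerm, hq]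

lemma hasSum_logSeriesTerm_scale {x y z : ℂ} (hx : ‖x‖ < 1) (hy : ‖y‖ < 1) (hz : ‖z‖ < 1)
    (p : PrimitiveTriple) :
    HasSum (fun n => logSeriesTerm x y z (PrimitiveTriple.scale (p, n)))
      (-(1 / p.1.2.2 * log (1 - x ^ p.1.1 * y ^ p.1.2.1 * z ^ p.1.2.2))) := by
  rw [← mul_neg]
  refine ((hasSum_pnat_pow_div (norm_pow_mul_pow_mul_pow_lt_one hx hy hz _ _ p.2.1.ne')).mul_left
    (1 / p.1.2.2 : ℂ)).congr_fun fun n => ?_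
  simp only [logSeriesTerm, PrimitiveTriple.scale]
  push_cast
  rw [pow_mul', pow_mul', pow_mul', mul_pow, mul_pow]
  field_simp

theorem vpv_three_dim_log_identity (x y z : ℂ) (hx : ‖x‖ < 1)
    (hy : ‖y‖ < 1) (hz : ‖z‖ < 1) :
    ∑' p : {p : ℕ × ℕ × ℕ // 0 < p.2.2 ∧ Nat.gcd p.1 (Nat.gcd p.2.1 p.2.2) = 1},
        (1 / ((p : ℕ × ℕ × ℕ).2.2 : ℂ)) *
          Complex.log (1 - x ^ (p : ℕ × ℕ × ℕ).1 * y ^ (p : ℕ × ℕ × ℕ).2.1 *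
            z ^ (p : ℕ × ℕ × ℕ).2.2) =
      Complex.log (1 - z) / ((1 - x) * (1 - y)) := by
  have hprimitive := (PrimitiveTriple.scale_injective.hasSum_iff fun q hq =>
    logSeriesTerm_eq_zero (by simpa [PrimitiveTriple.range_scale] using hq)).mpr
    (hasSum_logSeriesTerm hx hy hz)
  have hsum := (hprimitive.prod_fiberwise (hasSum_logSeriesTerm_scale hx hy hz)).neg
  simp only [neg_neg] at hsum
  rw [hsum.tsum_eq, div_eq_mul_inv, mul_inv]
  ring
end

section
/- The Taylor coefficients c_n of f(z) = ((1−yz)/(1−z))^{1/(1−y)} around z = 0 satisfy c_0 = 1, c_1 = 1, and the recurrence n·y·c_n + (n+2)·c_{n+2} = (2 + n + y + n·y)·c_{n+1} for n ≥ 0. -/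
/-- The function `((1 - y z)/(1 - z))^(1/(1-y))` defined via the principal logarithm. -/
noncomputable def hyperpyramidF (y : ℂ) : ℂ → ℂ := fun z =>
  Complex.exp ((1 / (1 - y)) * (Complex.log (1 - y * z) - Complex.log (1 - z)))

/-- The `n`-th Taylor coefficient of `hyperpyramidF y` at `0`. -/
noncomputable def hyperpyramidCoeff (y : ℂ) (n : ℕ) : ℂ :=
  iteratedDeriv n (hyperpyramidF y) 0 / (Nat.factorial n : ℂ)

/-!
The logarithmic derivative of `f = hyperpyramidF y` is
`(1 / (1 - y)) * (1 / (1 - z) - y / (1 - y z)) = 1 / ((1 - z) (1 - y z))`, so near `0`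
`f = (1 - z) (1 - y z) f' = f' - (1 + y) θf + y z θf`, where `θ = z d/dz` multiplies the `n`-th
Taylor coefficient by `n`. Comparing coefficients of `z ^ (n + 1)` gives the recurrence, and
`c₁ = f'(0) = f(0) = c₀ = 1`.
-/

open Complex Filter Topology Finset

section TaylorCoeff

variable {𝕜 : Type*} [NontriviallyNormedField 𝕜] {f g : 𝕜 → 𝕜}

noncomputable def taylorCoeff (f : 𝕜 → 𝕜) (n : ℕ) : 𝕜 :=
  iteratedDeriv n f 0 / (Nat.factorial n : 𝕜)

theorem taylorCoeff_zero (f : 𝕜 → 𝕜) : taylorCoeff f 0 = f 0 := by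
  simp [taylorCoeff]

theorem taylorCoeff_one (f : 𝕜 → 𝕜) : taylorCoeff f 1 = deriv f 0 := by
  simp [taylorCoeff]

theorem taylorCoeff_congr (h : f =ᶠ[𝓝 0] g) (n : ℕ) : taylorCoeff f n = taylorCoeff g n := by
  rw [taylorCoeff, taylorCoeff, h.iteratedDeriv_eq]

theorem taylorCoeff_const_mul (c : 𝕜) (f : 𝕜 → 𝕜) (n : ℕ) :
    taylorCoeff (fun z => c * f z) n = c * taylorCoeff f n := by
  simp [taylorCoeff, mul_div_assoc]

theorem taylorCoeff_add {n : ℕ} (hf : ContDiffAt 𝕜 n f 0) (hg : ContDiffAt 𝕜 n g 0) :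
    taylorCoeff (fun z => f z + g z) n = taylorCoeff f n + taylorCoeff g n := by
  rw [taylorCoeff, iteratedDeriv_fun_add hf hg, add_div, taylorCoeff, taylorCoeff]

variable [CharZero 𝕜]

theorem taylorCoeff_deriv (f : 𝕜 → 𝕜) (n : ℕ) :
    taylorCoeff (deriv f) n = (n + 1) * taylorCoeff f (n + 1) := by
  have : (n + 1 : 𝕜) ≠ 0 := n.cast_add_one_ne_zero
  rw [taylorCoeff, taylorCoeff, ← iteratedDeriv_succ', Nat.factorial_succ]
  push_cast
  field_simp

theorem taylorCoeff_id_mul {n : ℕ} (hg : ContDiffAt 𝕜 (n + 1) g 0) :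
    taylorCoeff (fun z => z * g z) (n + 1) = taylorCoeff g n := by
  have : (n + 1 : 𝕜) ≠ 0 := n.cast_add_one_ne_zero
  rw [taylorCoeff, iteratedDeriv_fun_mul contDiffAt_fun_id hg,
    sum_eq_single 1 (fun i _ hi => by simp [iteratedDeriv_fun_id_zero, hi]) (by simp)]
  simp only [iteratedDeriv_fun_id_zero, if_pos, Nat.choose_one_right, Nat.factorial_succ,
    add_tsub_cancel_right, taylorCoeff]
  push_cast
  field_simp

variable [CompleteSpace 𝕜]

theorem taylorCoeff_id_mul_deriv (hf : AnalyticAt 𝕜 f 0) (n : ℕ) :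
    taylorCoeff (fun z => z * deriv f z) n = n * taylorCoeff f n := by
  cases n with
  | zero => simp [taylorCoeff_zero]
  | succ n => rw [taylorCoeff_id_mul hf.deriv.contDiffAt, taylorCoeff_deriv, Nat.cast_succ]

theorem taylorCoeff_recurrence_of_eq_mul_deriv {y : 𝕜} (hf : AnalyticAt 𝕜 f 0)
    (hode : f =ᶠ[𝓝 0] fun z => (1 - z) * (1 - y * z) * deriv f z) (n : ℕ) :
    n * y * taylorCoeff f n + (n + 2) * taylorCoeff f (n + 2) =
      (2 + n + y + n * y) * taylorCoeff f (n + 1) := by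
  have hderiv : ∀ m : ℕ, ContDiffAt 𝕜 m (deriv f) 0 := fun m => hf.deriv.contDiffAt
  have hexpand : (fun z => (1 - z) * (1 - y * z) * deriv f z) = fun z =>
      (deriv f z + -(1 + y) * (z * deriv f z)) + y * (z * (z * deriv f z)) := by
    funext z; ring
  have hcoeff := taylorCoeff_congr hode (n + 1)
  rw [hexpand, taylorCoeff_add (by fun_prop) (by fun_prop),
    taylorCoeff_add (by fun_prop) (by fun_prop), taylorCoeff_const_mul, taylorCoeff_const_mul,
    taylorCoeff_id_mul (g := fun z => z * deriv f z) (by fun_prop), taylorCoeff_id_mul_deriv hf,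
    taylorCoeff_id_mul_deriv hf, taylorCoeff_deriv] at hcoeff
  push_cast at hcoeff
  linear_combination -hcoeff

end TaylorCoeff

theorem hasDerivAt_hyperpyramidF {y z : ℂ} (hy : y ≠ 1) (hz : 1 - z ∈ slitPlane)
    (hyz : 1 - y * z ∈ slitPlane) :
    HasDerivAt (hyperpyramidF y) (hyperpyramidF y z / ((1 - z) * (1 - y * z))) z := by
  have hlog : HasDerivAt (fun w => 1 / (1 - y) * (log (1 - y * w) - log (1 - w)))
      (1 / ((1 - z) * (1 - y * z))) z := by
    have h1 := (((hasDerivAt_id' z).const_mul y).const_sub 1).clog hyz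
    have h2 := ((hasDerivAt_id' z).const_sub 1).clog hz
    refine ((h1.sub h2).const_mul (1 / (1 - y))).congr_deriv ?_
    field_simp [slitPlane_ne_zero hz, slitPlane_ne_zero hyz]
    ring
  exact hlog.cexp.congr_deriv (by simp [hyperpyramidF, div_eq_mul_inv])

theorem analyticAt_hyperpyramidF (y : ℂ) : AnalyticAt ℂ (hyperpyramidF y) 0 := by
  unfold hyperpyramidF
  fun_prop (disch := simp)

theorem hyperpyramidF_eventuallyEq_mul_deriv {y : ℂ} (hy : y ≠ 1) :
    hyperpyramidF y =ᶠ[𝓝 0] fun z => (1 - z) * (1 - y * z) * deriv (hyperpyramidF y) z := by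
  have h1 : ∀ᶠ z in 𝓝 (0 : ℂ), 1 - z ∈ slitPlane :=
    (by fun_prop : ContinuousAt (fun z : ℂ => 1 - z) 0).eventually_mem
      (isOpen_slitPlane.mem_nhds (by simp))
  have h2 : ∀ᶠ z in 𝓝 (0 : ℂ), 1 - y * z ∈ slitPlane :=
    (by fun_prop : ContinuousAt (fun z : ℂ => 1 - y * z) 0).eventually_mem
      (isOpen_slitPlane.mem_nhds (by simp))
  filter_upwards [h1, h2] with z hz hyz
  rw [(hasDerivAt_hyperpyramidF hy hz hyz).deriv]
  exact (mul_div_cancel₀ _ (mul_ne_zero (slitPlane_ne_zero hz) (slitPlane_ne_zero hyz))).symm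

theorem hyperpyramid_coeff_recurrence (y : ℂ) (hy : ‖y‖ < 1) :
    hyperpyramidCoeff y 0 = 1 ∧ hyperpyramidCoeff y 1 = 1 ∧
      ∀ n : ℕ, (n : ℂ) * y * hyperpyramidCoeff y n +
          ((n : ℂ) + 2) * hyperpyramidCoeff y (n + 2) =
        (2 + (n : ℂ) + y + (n : ℂ) * y) * hyperpyramidCoeff y (n + 1) := by
  have hode := hyperpyramidF_eventuallyEq_mul_deriv (y := y) (by rintro rfl; simp at hy)
  have hc0 : hyperpyramidCoeff y 0 = 1 := by simp [hyperpyramidCoeff, hyperpyramidF]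
  have hc1 : hyperpyramidCoeff y 1 = hyperpyramidCoeff y 0 := by
    change taylorCoeff _ 1 = taylorCoeff _ 0
    simpa [taylorCoeff_one, taylorCoeff_zero] using hode.eq_of_nhds.symm
  exact ⟨hc0, hc1.trans hc0,
    taylorCoeff_recurrence_of_eq_mul_deriv (analyticAt_hyperpyramidF y) hode⟩
end

section
/- As formal power series in t over ℂ (or any field of characteristic zero containing q), ∏_{k≥0} (1 − q t^{2^k})^{-1} = ∏_{k≥0} ∏_{j=0}^{k} (1 + q^{2^j} t^{2^k}). -/
open PowerSeries

/-- The formal power series `∏_{k ≥ 0} (1 - q t^(2^k))⁻¹`, defined coefficientwise via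
stabilizing partial products. -/
noncomputable def binaryProd {K : Type*} [Field K] (q : K) : PowerSeries K :=
  PowerSeries.mk fun m =>
    PowerSeries.coeff m
      (∏ k ∈ Finset.range (m + 1), (1 - PowerSeries.C q * PowerSeries.X ^ (2 ^ k))⁻¹)

/-- The formal power series `∏_{k ≥ 0} ∏_{j = 0}^{k} (1 + q^(2^j) t^(2^k))`, defined
coefficientwise via stabilizing partial products. -/
noncomputable def binaryDistinctProd {K : Type*} [Field K] (q : K) : PowerSeries K :=
  PowerSeries.mk fun m =>
    PowerSeries.coeff m
      (∏ k ∈ Finset.range (m + 1), ∏ j ∈ Finset.range (k + 1),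
        (1 + PowerSeries.C (q ^ (2 ^ j)) * PowerSeries.X ^ (2 ^ k)))

/-!
Multiplying the first `n` factors `1 - q t^(2^k)` into the first `n` blocks of the right-hand
side telescopes, through `(1 - u)(1 + u) = 1 - u²`, to `∏_{j<n} (1 - q^(2^(j+1)) t^(2^n))`,
which is `1` modulo `t^(2^n)`. So the truncated products with `n = m + 1` factors, which define
the `m`-th coefficients, already agree up to degree `2^(m+1) - 1 ≥ m`.
-/

open Finset

section CommRing

variable {R : Type*} [CommRing R]

theorem prod_one_sub_mul_prod_one_add_pow_two_pow (a y : R) (n : ℕ) :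
    (∏ j ∈ range n, (1 - a ^ 2 ^ j * y)) * ∏ j ∈ range n, (1 + a ^ 2 ^ j * y) =
      ∏ j ∈ range n, (1 - a ^ 2 ^ (j + 1) * y ^ 2) := by
  rw [← prod_mul_distrib]
  refine prod_congr rfl fun j _ => ?_
  rw [pow_succ, pow_mul]
  ring

theorem prod_one_sub_mul_prod_prod_one_add (a x : R) (n : ℕ) :
    (∏ k ∈ range n, (1 - a * x ^ 2 ^ k)) *
        ∏ k ∈ range n, ∏ j ∈ range (k + 1), (1 + a ^ 2 ^ j * x ^ 2 ^ k) =
      ∏ j ∈ range n, (1 - a ^ 2 ^ (j + 1) * x ^ 2 ^ n) := by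
  induction n with
  | zero => simp
  | succ n ih =>
    have hsplit : (∏ j ∈ range n, (1 - a ^ 2 ^ (j + 1) * x ^ 2 ^ n)) * (1 - a * x ^ 2 ^ n) =
        ∏ j ∈ range (n + 1), (1 - a ^ 2 ^ j * x ^ 2 ^ n) := by
      rw [prod_range_succ' _ n, pow_zero, pow_one]
    calc _ = (∏ j ∈ range n, (1 - a ^ 2 ^ (j + 1) * x ^ 2 ^ n)) * (1 - a * x ^ 2 ^ n) *
            ∏ j ∈ range (n + 1), (1 + a ^ 2 ^ j * x ^ 2 ^ n) := by
          rw [← ih, prod_range_succ, prod_range_succ]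
          ring
      _ = _ := by
          rw [hsplit, prod_one_sub_mul_prod_one_add_pow_two_pow, ← pow_mul, ← pow_succ]

theorem dvd_prod_one_sub_mul_sub_one {ι : Type*} (s : Finset ι) (c : ι → R) (y : R) :
    y ∣ (∏ j ∈ s, (1 - c j * y)) - 1 := by
  have hy : Ideal.Quotient.mk (Ideal.span {y}) y = 0 :=
    Ideal.Quotient.eq_zero_iff_mem.mpr (Ideal.mem_span_singleton_self y)
  rw [← Ideal.mem_span_singleton, ← Ideal.Quotient.eq_zero_iff_mem]
  simp [hy]

end CommRing

namespace PowerSeries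

variable {K : Type*} [Field K]

theorem prod_inv_distrib {ι : Type*} (s : Finset ι) (f : ι → K⟦X⟧) :
    (∏ i ∈ s, f i)⁻¹ = ∏ i ∈ s, (f i)⁻¹ := by
  classical
  induction s using Finset.induction with
  | empty => simp
  | insert i s hi ih => rw [prod_insert hi, prod_insert hi, PowerSeries.mul_inv_rev, ih, mul_comm]

theorem coeff_inv_eq_of_X_pow_dvd_mul_sub_one {φ ψ : K⟦X⟧} {m n : ℕ}
    (hφ : constantCoeff φ ≠ 0) (h : X ^ n ∣ φ * ψ - 1) (hm : m < n) :
    coeff m φ⁻¹ = coeff m ψ := by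
  have hdiff : ψ - φ⁻¹ = φ⁻¹ * (φ * ψ - 1) := by
    rw [mul_sub, ← mul_assoc, PowerSeries.inv_mul_cancel φ hφ, one_mul, mul_one]
  have hdvd : X ^ n ∣ ψ - φ⁻¹ := hdiff ▸ dvd_mul_of_dvd_right h _
  rw [eq_comm, ← sub_eq_zero, ← map_sub, X_pow_dvd_iff.mp hdvd m hm]

end PowerSeries

theorem binaryProd_eq_binaryDistinctProd {K : Type*} [Field K] (q : K) :
    binaryProd q = binaryDistinctProd q := by
  ext m
  rw [binaryProd, binaryDistinctProd, coeff_mk, coeff_mk, ← PowerSeries.prod_inv_distrib]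
  refine coeff_inv_eq_of_X_pow_dvd_mul_sub_one ?_ ?_ (Nat.lt_of_succ_lt Nat.lt_two_pow_self)
  · simp [map_prod]
  · simp only [map_pow]
    rw [prod_one_sub_mul_prod_prod_one_add]
    exact dvd_prod_one_sub_mul_sub_one _ _ _
end
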